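/- arXiv:2309.17049 — 2 statements merged into one kernel-verified Lean document; each statement's English description precedes it below -/
import Mathlib

section
/- Let $g : \mathbb{N} \to \mathbb{N}$ be a monotone (growing) function with $g(1) \geq 1$, and let $T(n,k)$ be any function on positive integers satisfying: $T(n,k) = 1$ for $n \leq 2$; $T(n,1) \leq 2\,T(\lfloor 3n/4 \rfloor, 1)$ for $n \geq 3$; and $T(n,k) \leq 2\,T(\lfloor 3n/4 \rfloor, k) + g(k)\, T(\lfloor 3n/4 \rfloor, k-1)$ for $n \geq 3$, $k \geq 2$. Then $T(n,k) \leq f(k) \cdot n^3$, where $f(1) = 1$ and $f(k) = 2.7^{k-1} \prod_{i=2}^k g(i)$ for $k \geq 2$. -/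
open Finset

open scoped Classical

variable {α : Type*}

structure Hypergraph' (α : Type*) where
  verts : Finset α
  edges : Finset (Finset α)
  edge_sub : ∀ e ∈ edges, e ⊆ verts

namespace Hypergraph'

/-- `U` is a subedge of `H`: it is contained in some hyperedge. -/
def IsSubedge (H : Hypergraph' α) (U : Finset α) : Prop := ∃ e ∈ H.edges, U ⊆ e

/-- `H` is a `(2,d)`-hypergraph: any two distinct edges intersect in at most `d` vertices. -/
def Is2dHypergraph (H : Hypergraph' α) (d : ℕ) : Prop :=
  ∀ e ∈ H.edges, ∀ f ∈ H.edges, e ≠ f → (e ∩ f).card ≤ d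

/-- The induced subhypergraph `H[U]`. -/
noncomputable def induce (H : Hypergraph' α) (U : Finset α) : Hypergraph' α where
  verts := U
  edges := (H.edges.image (· ∩ U)).filter (· ≠ ∅)
  edge_sub := by
    intro e he
    simp only [Finset.mem_filter, Finset.mem_image] at he
    obtain ⟨⟨f, hf, rfl⟩, -⟩ := he
    exact Finset.inter_subset_right

/-- The adjacency graph of a hypergraph: two distinct vertices are adjacent
iff they lie in a common edge. -/
def adjGraph (H : Hypergraph' α) : SimpleGraph α where
  Adj v w := v ≠ w ∧ ∃ e ∈ H.edges, v ∈ e ∧ w ∈ e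
  symm := ⟨by rintro v w ⟨hne, e, he, hv, hw⟩; exact ⟨hne.symm, e, he, hw, hv⟩⟩
  loopless := ⟨by rintro v ⟨hne, -⟩; exact hne rfl⟩

/-- Adjacency in `H` avoiding the vertex set `S` (i.e. adjacency in `H[V(H) \ S]`). -/
def avoidGraph (H : Hypergraph' α) (S : Finset α) : SimpleGraph α where
  Adj v w := v ≠ w ∧ v ∉ S ∧ w ∉ S ∧ ∃ e ∈ H.edges, v ∈ e ∧ w ∈ e
  symm := ⟨by rintro v w ⟨hne, hv, hw, e, he, h1, h2⟩; exact ⟨hne.symm, hw, hv, e, he, h2, h1⟩⟩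
  loopless := ⟨by rintro v ⟨hne, -⟩; exact hne rfl⟩

/-- `S` is an `(A,B)`-separator of `H`: no path of `H[V(H) \ S]` joins
a vertex of `A \ S` to a vertex of `B \ S`. -/
def IsSeparator (H : Hypergraph' α) (A B S : Finset α) : Prop :=
  ∀ a ∈ A, a ∉ S → ∀ b ∈ B, b ∉ S → ¬ (H.avoidGraph S).Reachable a b

/-- `U` has an edge cover of weight at most `k` (edge cover number `ρ(U) ≤ k`). -/
def CoverLE (H : Hypergraph' α) (U : Finset α) (k : ℕ) : Prop :=
  ∃ F : Finset (Finset α), F ⊆ H.edges ∧ U ⊆ F.biUnion id ∧ F.card ≤ k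

/-- `(T, B)` is a tree decomposition of `H`. -/
def IsTreeDecomp (H : Hypergraph' α) {ι : Type*} (T : SimpleGraph ι) (B : ι → Finset α) : Prop :=
  T.IsTree ∧ (∀ u, B u ⊆ H.verts) ∧ (∀ e ∈ H.edges, ∃ u, e ⊆ B u) ∧
  (∀ v ∈ H.verts, (T.induce {u | v ∈ B u}).Connected)

/-- Generalised hypertree width of `H` is at most `k`. -/
def ghwLE (H : Hypergraph' α) (k : ℕ) : Prop :=
  ∃ (ι : Type) (T : SimpleGraph ι) (B : ι → Finset α),
    H.IsTreeDecomp T B ∧ ∀ u, H.CoverLE (B u) k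

/-- Two subedges are incompatible if their union is not a subedge. -/
def Incompatible (H : Hypergraph' α) (X Y : Finset α) : Prop := ¬ H.IsSubedge (X ∪ Y)

/-- `U₁,…,U_a, S₁,…,S_b` form an `(a,b)` subedge hypergrid (shyg). -/
def IsShyg (H : Hypergraph' α) {a b : ℕ} (U : Fin a → Finset α) (S : Fin b → Finset α) : Prop :=
  (∀ i, H.IsSubedge (U i)) ∧ (∀ j, H.IsSubedge (S j)) ∧
  (∀ i i', i ≠ i' → H.Incompatible (U i) (U i')) ∧
  (∀ j j', j ≠ j' → H.Incompatible (S j) (S j')) ∧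
  (∀ i j, H.Incompatible (U i) (S j)) ∧
  (∀ i i', i ≠ i' → Disjoint (U i) (U i')) ∧
  (∀ j i, (S j ∩ U i).Nonempty)

/-- A strong shyg: additionally the `S j` intersect pairwise disjointly inside `⋃ U i`. -/
def IsStrongShyg (H : Hypergraph' α) {a b : ℕ}
    (U : Fin a → Finset α) (S : Fin b → Finset α) : Prop :=
  H.IsShyg U S ∧ ∀ j j', j ≠ j' → S j ∩ S j' ∩ Finset.univ.biUnion U = ∅

/-- `H` has a strong `(a,b)`-shyg. -/
def HasStrongShyg (H : Hypergraph' α) (a b : ℕ) : Prop :=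
  ∃ (U : Fin a → Finset α) (S : Fin b → Finset α), H.IsStrongShyg U S

/-- `ext(C, E')`: the edges of `E'` meeting `C`. -/
noncomputable def ext (E' : Finset (Finset α)) (C : Finset α) : Finset (Finset α) :=
  E'.filter fun e => (e ∩ C).Nonempty

/-- `C` is (the vertex set of) a connected component of `H`. -/
def IsConnComp (H : Hypergraph' α) (C : Finset α) : Prop :=
  ∃ v ∈ H.verts, ∀ w, w ∈ C ↔ w ∈ H.verts ∧ H.adjGraph.Reachable v w

end Hypergraph'

/-- The vertex set of `T_{x,Y}`: the union of all paths of `G` starting at `x`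
whose second vertex belongs to `Y`. -/
def subtreeVerts {V : Type*} (G : SimpleGraph V) (x : V) (Y : Set V) : Set V :=
  {v | v = x ∨ ∃ w : G.Walk x v, w.IsPath ∧ w.getVert 1 ∈ Y ∧ ¬ w.Nil}

/-- The tree `T⁺_{t,Y}`: the restriction of `T` to `s` together with a fresh node `none`
made adjacent to `t`. -/
def plusGraph {ι : Type*} (T : SimpleGraph ι) (s : Set ι) (t : ι) :
    SimpleGraph (Option s) where
  Adj a b :=
    (∃ u v : s, a = some u ∧ b = some v ∧ T.Adj u v) ∨
    (a = none ∧ ∃ v : s, b = some v ∧ (v : ι) = t) ∨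
    (b = none ∧ ∃ u : s, a = some u ∧ (u : ι) = t)
  symm := ⟨by
    rintro a b (⟨u, v, rfl, rfl, h⟩ | ⟨rfl, v, rfl, hv⟩ | ⟨rfl, u, rfl, hu⟩)
    · exact Or.inl ⟨v, u, rfl, rfl, h.symm⟩
    · exact Or.inr (Or.inr ⟨rfl, v, rfl, hv⟩)
    · exact Or.inr (Or.inl ⟨rfl, u, rfl, hu⟩)⟩
  loopless := ⟨by
    rintro a (⟨u, v, rfl, h1, h2⟩ | ⟨rfl, v, h, -⟩ | ⟨rfl, u, h, -⟩)
    · obtain rfl : u = v := Option.some_injective _ h1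
      exact T.loopless.irrefl _ h2
    · exact nomatch h
    · exact nomatch h⟩

/-- `ξ'(n,k,d)` from the paper. -/
def xi' (k d : ℕ) : ℕ → ℕ
  | 0 => (3*k+1)*d+1
  | n+1 => ((3*k+1)*d)^2 * xi' k d n + 1
theorem recurrence_bound (g : ℕ → ℕ) (hg : Monotone g) (hg1 : 1 ≤ g 1)
    (T : ℕ → ℕ → ℝ) (hpos : ∀ n k, 1 ≤ n → 1 ≤ k → 0 < T n k)
    (hbase : ∀ n k, 1 ≤ n → n ≤ 2 → 1 ≤ k → T n k = 1)
    (hrec1 : ∀ n, 3 ≤ n → T n 1 ≤ 2 * T (3 * n / 4) 1)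
    (hrec : ∀ n k, 3 ≤ n → 2 ≤ k →
      T n k ≤ 2 * T (3 * n / 4) k + (g k : ℝ) * T (3 * n / 4) (k - 1)) :
    ∀ n k, 1 ≤ n → 1 ≤ k →
      T n k ≤
        (if k = 1 then 1 else (2.7 : ℝ) ^ (k - 1) * ∏ i ∈ Finset.Icc 2 k, (g i : ℝ)) *
          (n : ℝ) ^ 3 := by

  set P : ℕ → ℝ := fun k => (2.7:ℝ) ^ (k-1) * ∏ i ∈ Finset.Icc 2 k, (g i : ℝ) with hP
  have hgge : ∀ i, 1 ≤ i → (1:ℝ) ≤ (g i : ℝ) := by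
    intro i hi
    exact_mod_cast le_trans hg1 (hg hi)
  have hP1 : ∀ k, 1 ≤ P k := by
    intro k
    have h1 : (1:ℝ) ≤ (2.7:ℝ) ^ (k-1) := one_le_pow₀ (by norm_num)
    have h2 : (1:ℝ) ≤ ∏ i ∈ Finset.Icc 2 k, (g i : ℝ) := by
      have hh : ∏ i ∈ Finset.Icc 2 k, (1:ℝ) ≤ ∏ i ∈ Finset.Icc 2 k, (g i : ℝ) :=
        Finset.prod_le_prod (fun i _ => by norm_num)
          (fun i hi => hgge i (by have := (Finset.mem_Icc.mp hi).1; omega))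
      simpa using hh
    calc (1:ℝ) = 1 * 1 := by ring
    _ ≤ _ := mul_le_mul h1 h2 (by norm_num) (by linarith)
  have hPone : P 1 = 1 := by
    have he : Finset.Icc 2 1 = (∅ : Finset ℕ) := Finset.Icc_eq_empty (by norm_num)
    simp [hP, he]
  have hPrec : ∀ k, 2 ≤ k → P k = 2.7 * (g k : ℝ) * P (k-1) := by
    intro k hk
    obtain ⟨j, rfl⟩ : ∃ j, k = j + 1 := ⟨k-1, by omega⟩
    have hj : 1 ≤ j := by omega
    simp only [hP, Nat.add_sub_cancel]
    rw [Finset.prod_Icc_succ_top (by omega : 2 ≤ j + 1)]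
    obtain ⟨i, rfl⟩ : ∃ i, j = i + 1 := ⟨j-1, by omega⟩
    simp only [Nat.add_sub_cancel, pow_succ]
    ring
  have main : ∀ n, ∀ k, 1 ≤ n → 1 ≤ k → T n k ≤ P k * (n:ℝ)^3 := by
    intro n
    induction n using Nat.strong_induction_on with
    | _ n ih =>
    intro k hn hk
    by_cases h2 : n ≤ 2
    · rw [hbase n k hn h2 hk]
      have hn3 : (1:ℝ) ≤ (n:ℝ)^3 := one_le_pow₀ (by exact_mod_cast hn)
      nlinarith [hP1 k]
    · push_neg at h2
      have hn3 : 3 ≤ n := h2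
      set m := 3 * n / 4 with hm
      have hm1 : 1 ≤ m := by omega
      have hmn : m < n := by omega
      have hmr : (m:ℝ) ≤ 3 * (n:ℝ) / 4 := by
        have h := (Nat.cast_div_le : ((3*n/4 : ℕ):ℝ) ≤ ((3*n : ℕ):ℝ)/((4:ℕ):ℝ))
        push_cast at h
        rw [hm]
        push_cast
        linarith
      have hm0 : (0:ℝ) ≤ (m:ℝ) := Nat.cast_nonneg m
      have hm3 : (m:ℝ)^3 ≤ 27/64 * (n:ℝ)^3 := by
        have h := pow_le_pow_left₀ hm0 hmr 3
        nlinarith [h]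
      rcases eq_or_lt_of_le hk with hk1 | hk2
      · obtain rfl : k = 1 := hk1.symm
        have h1 := hrec1 n hn3
        have h2 := ih m hmn 1 hm1 le_rfl
        rw [← hm] at h1
        rw [hPone] at h2 ⊢
        nlinarith [hpos m 1 hm1 le_rfl]
      · have hk2' : 2 ≤ k := hk2
        have h1 := hrec n k hn3 hk2'
        have h2 := ih m hmn k hm1 hk
        have h3 := ih m hmn (k-1) hm1 (by omega)
        have hrecP := hPrec k hk2'
        have hg0 : (0:ℝ) ≤ (g k : ℝ) := Nat.cast_nonneg _
        rw [← hm] at h1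
        have step1 : T n k ≤ (2 * P k + (g k:ℝ) * P (k-1)) * (m:ℝ)^3 := by
          nlinarith [mul_le_mul_of_nonneg_left h3 hg0]
        have hcoef : (0:ℝ) ≤ 2 * P k + (g k:ℝ) * P (k-1) := by
          nlinarith [hP1 k, hP1 (k-1), hg0]
        have step2 : (2 * P k + (g k:ℝ) * P (k-1)) * (m:ℝ)^3
            ≤ (2 * P k + (g k:ℝ) * P (k-1)) * (27/64 * (n:ℝ)^3) :=
          mul_le_mul_of_nonneg_left hm3 hcoef
        have step3 : (2 * P k + (g k:ℝ) * P (k-1)) * (27/64 * (n:ℝ)^3) = P k * (n:ℝ)^3 := by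
          rw [hrecP]; ring
        linarith
  intro n k hn hk
  have h := main n k hn hk
  rcases eq_or_ne k 1 with rfl | hne
  · rw [if_pos rfl]
    rw [hPone] at h
    exact h
  · rw [if_neg hne]
    exact h
end

section
/- Let $H$ be a hypergraph with generalised hypertree width at most $k$ and let $E' \subseteq E(H)$. Then there is a weak partition of $E'$ into three sets $E'_0, E'_1, E'_2$ such that: (1) there is a $(\bigcup E'_1, \bigcup E'_2)$-separator $S$ with $\bigcup E'_0 \subseteq S$ and edge cover number $\rho(S) \leq k$; and (2) $|E'_1| \leq \frac{2}{3}|E'|$ and $|E'_2| \leq \frac{2}{3}|E'|$. -/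
open Finset

open scoped Classical

variable {α : Type*}

namespace BalSepAux


open SimpleGraph Walk

variable {ι : Type*} {T : SimpleGraph ι}

/-- `u` and `u'` are on the same side of `t` in `T`. -/
def SS (T : SimpleGraph ι) (t u u' : ι) : Prop := ∃ w : T.Walk u u', t ∉ w.support

lemma SS.refl {t u : ι} (h : u ≠ t) : SS T t u u :=
  ⟨Walk.nil, by simpa using fun h' => h h'.symm⟩

lemma SS.symm {t u u' : ι} (h : SS T t u u') : SS T t u' u := by
  obtain ⟨w, hw⟩ := h
  exact ⟨w.reverse, by simpa [Walk.support_reverse] using hw⟩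

lemma SS.trans {t u u' u'' : ι} (h : SS T t u u') (h' : SS T t u' u'') : SS T t u u'' := by
  obtain ⟨w, hw⟩ := h; obtain ⟨w', hw'⟩ := h'
  refine ⟨w.append w', ?_⟩
  rw [Walk.mem_support_append_iff]
  rintro (h | h) <;> [exact hw h; exact hw' h]

lemma isPath_concat {u v w : ι} {p : T.Walk u v} (hp : p.IsPath) (h : T.Adj v w)
    (hw : w ∉ p.support) : (p.concat h).IsPath := by
  rw [← Walk.isPath_reverse_iff, Walk.reverse_concat]
  exact hp.reverse.cons (by simpa [Walk.support_reverse] using hw)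

lemma pth_support_subset (pth : ∀ a b : ι, T.Walk a b)
    (huniq : ∀ {a b : ι} (q : T.Walk a b), q.IsPath → q = pth a b)
    {a b : ι} (w : T.Walk a b) : (pth a b).support ⊆ w.support := by
  rw [← huniq w.bypass w.bypass_isPath]
  exact w.support_bypass_subset

/-- A vertex cannot be on the `t'` side of `t` and on the `t` side of `t'`
for adjacent `t`, `t'`. -/
lemma not_both_sides (pth : ∀ a b : ι, T.Walk a b)
    (hpth : ∀ a b, (pth a b).IsPath)
    (huniq : ∀ {a b : ι} (q : T.Walk a b), q.IsPath → q = pth a b)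
    {t t' x : ι} (hadj : T.Adj t t')
    (h1 : SS T t x t') (h2 : SS T t' x t) : False := by
  obtain ⟨w1, hw1⟩ := h1
  obtain ⟨w2, hw2⟩ := h2
  have ht1 : t ∉ (pth x t').support := fun h => hw1 (pth_support_subset pth huniq w1 h)
  have ht2 : t' ∉ (pth x t).support := fun h => hw2 (pth_support_subset pth huniq w2 h)
  have hp3 : ((pth x t').concat hadj.symm).IsPath := isPath_concat (hpth x t') hadj.symm ht1
  have he : (pth x t').concat hadj.symm = pth x t := huniq _ hp3
  apply ht2
  rw [← he, Walk.support_concat]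
  exact List.mem_append_left _ (Walk.end_mem_support _)

lemma no_escape (pth : ∀ a b : ι, T.Walk a b)
    (huniq : ∀ {a b : ι} (q : T.Walk a b), q.IsPath → q = pth a b)
    (s : Finset ι) (r : ι) (hr : r ∈ s) (next : ι → ι)
    (hadj : ∀ x ∈ s, T.Adj x (next x)) (hmem : ∀ x ∈ s, next x ∈ s)
    (h2 : ∀ x ∈ s, next (next x) ≠ x) : False := by
  set seq : ℕ → ι := fun n => next^[n] r with hseqdef
  have hseq : ∀ n, seq n ∈ s := by
    intro n
    induction n with
    | zero => simpa [hseqdef]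
    | succ n ih =>
      have : seq (n+1) = next (seq n) := Function.iterate_succ_apply' next n r
      rw [this]; exact hmem _ ih
  have hseqsucc : ∀ n, seq (n+1) = next (seq n) := fun n => Function.iterate_succ_apply' next n r
  have hseq0 : seq 0 = r := rfl
  have key : ∀ n, ∃ p : T.Walk r (seq n), p.IsPath ∧ p.length = n ∧
      (∀ x ∈ p.support, x ∈ s) ∧ (∀ m, n = m + 1 → p.getVert m = seq m) := by
    intro n
    induction n with
    | zero =>
      refine ⟨(Walk.nil : T.Walk r r).copy rfl hseq0.symm, ?_, ?_, ?_, ?_⟩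
      · simp [Walk.isPath_def]
      · simp
      · intro x hx
        simp only [Walk.support_copy, Walk.support_nil, List.mem_singleton] at hx
        subst hx; exact hr
      · omega
    | succ n ih =>
      obtain ⟨p, hp, hlen, hsup, hpen⟩ := ih
      have hadj' : T.Adj (seq n) (seq (n+1)) := by rw [hseqsucc]; exact hadj _ (hseq n)
      have hnotmem : seq (n+1) ∉ p.support := by
        intro hmem'
        match n, p, hlen, hpen, hmem', hadj' with
        | 0, p, hlen, hpen, hmem', hadj' =>
          have hsupl : p.support.length = 1 := by rw [Walk.length_support, hlen]
          obtain ⟨a, ha⟩ := List.length_eq_one_iff.mp hsupl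
          have h1 : seq 1 = a := by simpa [ha] using hmem'
          have h0 : r = a := by
            have := p.start_mem_support; simpa [ha] using this
          exact hadj'.ne (by rw [hseq0, h0, ← h1])
        | (m+1), p, hlen, hpen, hmem', hadj' =>
          have hd : (p.dropUntil _ hmem').IsPath := hp.dropUntil hmem'
          have hsgl : (Walk.cons hadj'.symm Walk.nil :
              T.Walk (seq (m+1+1)) (seq (m+1))).IsPath := by
            simp [Walk.isPath_def, hadj'.ne']
          have hdu : p.dropUntil _ hmem' = Walk.cons hadj'.symm Walk.nil :=
            (huniq _ hd).trans (huniq _ hsgl).symm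
          have hts := p.take_spec hmem'
          have hlt : (p.takeUntil _ hmem').length = m := by
            have := congrArg Walk.length hts
            rw [Walk.length_append, hdu] at this
            simp only [Walk.length_cons, Walk.length_nil] at this
            omega
          have hgv : p.getVert m = seq (m+1+1) := by
            conv_lhs => rw [← hts]
            rw [Walk.getVert_append, hlt]
            simp
          rw [hpen m rfl] at hgv
          exact h2 (seq m) (hseq m) (by rw [← hseqsucc, ← hseqsucc]; exact hgv.symm)
      refine ⟨p.concat hadj', isPath_concat hp hadj' hnotmem, ?_, ?_, ?_⟩
      · rw [Walk.length_concat, hlen]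
      · intro x hx
        rw [Walk.support_concat, List.mem_append] at hx
        rcases hx with hx | hx
        · exact hsup x hx
        · simp only [List.mem_singleton] at hx; subst hx; exact hseq _
      · intro m hm
        obtain rfl : m = n := by omega
        rw [Walk.concat_eq_append, Walk.getVert_append, hlen]
        simp
  obtain ⟨p, hp, hlen, hsup, -⟩ := key (s.card)
  have hcard : p.support.toFinset ⊆ s := fun x hx => hsup x (List.mem_toFinset.mp hx)
  have := Finset.card_le_card hcard
  rw [List.toFinset_card_of_nodup hp.support_nodup, Walk.length_support, hlen] at this
  omega



lemma split_lemma {β : Type*} [DecidableEq β] (F : Finset β) (R : β → β → Prop)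
    [∀ e f, Decidable (R e f)] (W : ℕ)
    (hFW : F.card ≤ W)
    (hrefl : ∀ e ∈ F, R e e)
    (htrans : ∀ e f g, f ∈ F → R e f → R f g → R e g)
    (hbound : ∀ e ∈ F, 2 * (F.filter (R e)).card ≤ W) :
    ∃ G ⊆ F, (∀ e ∈ G, ∀ f ∈ F, R e f → f ∈ G) ∧
      3 * G.card ≤ 2 * W ∧ 3 * (F \ G).card ≤ 2 * W := by
  classical
  let P : Finset β → Prop := fun G => (∀ e ∈ G, ∀ f ∈ F, R e f → f ∈ G) ∧ 3 * G.card ≤ 2 * W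
  have hmem : ∀ X : Finset β, X ∈ F.powerset.filter P ↔ X ⊆ F ∧ P X := by
    intro X; simp [Finset.mem_filter, Finset.mem_powerset]
  have hempty : (∅ : Finset β) ∈ F.powerset.filter P := by
    rw [hmem]; exact ⟨Finset.empty_subset _, fun e he => absurd he (Finset.notMem_empty e),
      by simp⟩
  obtain ⟨G, hG𝒮, hmax⟩ := (F.powerset.filter P).exists_max_image Finset.card ⟨∅, hempty⟩
  rw [hmem] at hG𝒮
  obtain ⟨hGF, hGclosed, hGsmall⟩ := hG𝒮
  refine ⟨G, hGF, hGclosed, hGsmall, ?_⟩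
  by_contra hbad
  push_neg at hbad
  have hcards : (F \ G).card = F.card - G.card := Finset.card_sdiff_of_subset hGF
  have hGle : G.card ≤ F.card := Finset.card_le_card hGF
  have hGsm : 3 * G.card < W := by omega
  have hne : (F \ G).Nonempty := by
    rw [← Finset.card_pos]; omega
  obtain ⟨e, he⟩ := hne
  rw [Finset.mem_sdiff] at he
  obtain ⟨heF, heG⟩ := he
  have heC : e ∈ F.filter (R e) := Finset.mem_filter.mpr ⟨heF, hrefl e heF⟩
  have hCclosed : ∀ f ∈ F.filter (R e), ∀ g ∈ F, R f g → g ∈ F.filter (R e) := by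
    intro f hf g hg hfg
    rw [Finset.mem_filter] at hf ⊢
    exact ⟨hg, htrans e f g hf.1 hf.2 hfg⟩
  have hC𝒮 : F.filter (R e) ∈ F.powerset.filter P := by
    rw [hmem]
    refine ⟨Finset.filter_subset _ _, hCclosed, ?_⟩
    have := hbound e heF
    omega
  have hCle : (F.filter (R e)).card ≤ G.card := hmax _ hC𝒮
  have hGC : G ∪ F.filter (R e) ∉ F.powerset.filter P := by
    intro hmem'
    have := hmax _ hmem'
    have hlt : G.card < (G ∪ F.filter (R e)).card :=
      Finset.card_lt_card ⟨Finset.subset_union_left, fun hsub =>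
        heG (hsub (Finset.mem_union_right _ heC))⟩
    omega
  have hGCbig : ¬ (3 * (G ∪ F.filter (R e)).card ≤ 2 * W) := by
    intro hle
    apply hGC
    rw [hmem]
    refine ⟨Finset.union_subset hGF (Finset.filter_subset _ _), ?_, hle⟩
    intro f hf g hg hfg
    rcases Finset.mem_union.mp hf with hf | hf
    · exact Finset.mem_union_left _ (hGclosed f hf g hg hfg)
    · exact Finset.mem_union_right _ (hCclosed f hf g hg hfg)
  have := Finset.card_union_le G (F.filter (R e))
  have := hbound e heF
  omega

end BalSepAux

theorem balanced_separation_of_ghw {α : Type*} (H : Hypergraph' α) (k : ℕ)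
    (hghw : H.ghwLE k) (E' : Finset (Finset α)) (hE' : E' ⊆ H.edges) :
    ∃ E0 E1 E2 : Finset (Finset α),
      E0 ∪ E1 ∪ E2 = E' ∧ Disjoint E0 E1 ∧ Disjoint E0 E2 ∧ Disjoint E1 E2 ∧
      (∃ S : Finset α, H.IsSeparator (E1.biUnion id) (E2.biUnion id) S ∧
        E0.biUnion id ⊆ S ∧ H.CoverLE S k) ∧
      3 * E1.card ≤ 2 * E'.card ∧ 3 * E2.card ≤ 2 * E'.card := by
  classical
  rcases E'.eq_empty_or_nonempty with rfl | ⟨e0, he0⟩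
  · refine ⟨∅, ∅, ∅, by simp, by simp, by simp, by simp,
      ⟨∅, ?_, by simp, ⟨∅, by simp, by simp, by simp⟩⟩, by simp, by simp⟩
    intro a ha
    simp at ha
  obtain ⟨ι, T, Bg, ⟨hTree, hBsub, hBedge, hBconn⟩, hcov⟩ := hghw
  have hne : Nonempty ι := hTree.isConnected.nonempty
  -- canonical paths in the tree
  let pth : ∀ a b : ι, T.Walk a b := fun a b =>
    ((hTree.isConnected.preconnected a b).some).bypass
  have hpth : ∀ a b, (pth a b).IsPath := fun a b => SimpleGraph.Walk.bypass_isPath _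
  have hpu := SimpleGraph.isAcyclic_iff_path_unique.mp hTree.IsAcyclic
  have huniq : ∀ {a b : ι} (q : T.Walk a b), q.IsPath → q = pth a b := by
    intro a b q hq
    exact congrArg Subtype.val (hpu ⟨q, hq⟩ ⟨pth a b, hpth a b⟩)
  -- hosts of edges and vertices
  have hhostex : ∀ e : Finset α, ∃ x : ι, e ∈ H.edges → e ⊆ Bg x := by
    intro e
    by_cases h : e ∈ H.edges
    · obtain ⟨x, hx⟩ := hBedge e h
      exact ⟨x, fun _ => hx⟩
    · exact ⟨hne.some, fun h' => absurd h' h⟩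
  choose host hhost using hhostex
  have hnvex : ∀ v : α, ∃ x : ι, v ∈ H.verts → v ∈ Bg x := by
    intro v
    by_cases h : v ∈ H.verts
    · obtain ⟨⟨x, hx⟩⟩ := (hBconn v h).nonempty
      exact ⟨x, fun _ => hx⟩
    · exact ⟨hne.some, fun h' => absurd h' h⟩
  choose nv hnv using hnvex
  -- support walks for a vertex
  have hV2 : ∀ (t : ι) (v : α), v ∈ H.verts → v ∉ Bg t → ∀ x y : ι, v ∈ Bg x → v ∈ Bg y →
      BalSepAux.SS T t x y := by
    intro t v hv hvt x y hx hy
    obtain ⟨w0⟩ := ((hBconn v hv).preconnected ⟨x, hx⟩ ⟨y, hy⟩)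
    refine ⟨w0.map (SimpleGraph.Embedding.induce _).toHom, ?_⟩
    intro (hmem : t ∈ (w0.map (SimpleGraph.Embedding.induce _).toHom).support)
    rw [SimpleGraph.Walk.support_map] at hmem
    obtain ⟨⟨z', hz'⟩, hmem', hz''⟩ := List.mem_map.mp hmem
    exact hvt (hz'' ▸ hz')
  -- reachability avoiding `Bg t` stays on one side of `t`
  have hV4 : ∀ (t : ι) (a b : α), (H.avoidGraph (Bg t)).Walk a b → a ∈ H.verts → b ∈ H.verts →
      a ∉ Bg t → BalSepAux.SS T t (nv a) (nv b) := by
    intro t a b w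
    induction w with
    | nil =>
      intro ha _ hat
      exact BalSepAux.SS.refl (fun h => hat (h ▸ hnv _ ha))
    | @cons a c b hadj w ih =>
      intro ha hb hat
      obtain ⟨hne', hanS, hcnS, f, hf, haf, hcf⟩ := hadj
      have hcv : c ∈ H.verts := H.edge_sub f hf hcf
      have h1 : BalSepAux.SS T t (nv a) (host f) :=
        hV2 t a ha hat _ _ (hnv a ha) ((hhost f hf) haf)
      have h2 : BalSepAux.SS T t (host f) (nv c) :=
        hV2 t c hcv hcnS _ _ ((hhost f hf) hcf) (hnv c hcv)
      exact (h1.trans h2).trans (ih hcv hb hcnS)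
  -- the linking relation between edges
  let Rr : ι → Finset α → Finset α → Prop := fun t e f =>
    ∃ a ∈ e, a ∉ Bg t ∧ ∃ b ∈ f, b ∉ Bg t ∧ (H.avoidGraph (Bg t)).Reachable a b
  have hRsymm : ∀ t e f, Rr t e f → Rr t f e := by
    rintro t e f ⟨a, ha, hat, b, hb, hbt, hr⟩
    exact ⟨b, hb, hbt, a, ha, hat, hr.symm⟩
  have hRtrans : ∀ t e f g, f ∈ H.edges → Rr t e f → Rr t f g → Rr t e g := by
    rintro t e f g hf ⟨a, ha, hat, b, hb, hbt, hr⟩ ⟨b', hb', hbt', c, hc, hct, hr'⟩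
    refine ⟨a, ha, hat, c, hc, hct, hr.trans (SimpleGraph.Reachable.trans ?_ hr')⟩
    by_cases hbe : b = b'
    · subst hbe; rfl
    · exact SimpleGraph.Adj.reachable ⟨hbe, hbt, hbt', f, hf, hb, hb'⟩
  have hRSS : ∀ t e f, e ∈ H.edges → f ∈ H.edges → Rr t e f →
      BalSepAux.SS T t (host e) (host f) := by
    rintro t e f he hf ⟨a, ha, hat, b, hb, hbt, hr⟩
    have hav : a ∈ H.verts := H.edge_sub e he ha
    have hbv : b ∈ H.verts := H.edge_sub f hf hb
    have h1 : BalSepAux.SS T t (host e) (nv a) := hV2 t a hav hat _ _ ((hhost e he) ha) (hnv a hav)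
    have h2 : BalSepAux.SS T t (nv b) (host f) := hV2 t b hbv hbt _ _ (hnv b hbv) ((hhost f hf) hb)
    exact h1.trans ((hV4 t a b hr.some hav hbv hat).trans h2)
  -- the finite subtree containing all hosts
  set r : ι := host e0 with hrdef
  set T' : Finset ι := E'.biUnion (fun e => (pth r (host e)).support.toFinset) with hT'def
  have hhostT' : ∀ e ∈ E', host e ∈ T' := fun e he =>
    Finset.mem_biUnion.mpr ⟨e, he, List.mem_toFinset.mpr (SimpleGraph.Walk.end_mem_support _)⟩
  have hrT' : r ∈ T' :=
    Finset.mem_biUnion.mpr ⟨e0, he0, List.mem_toFinset.mpr (SimpleGraph.Walk.start_mem_support _)⟩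
  have hrsub : ∀ x ∈ T', ∀ z ∈ (pth r x).support, z ∈ T' := by
    intro x hx z hz
    obtain ⟨e₁, he₁, hx'⟩ := Finset.mem_biUnion.mp hx
    rw [List.mem_toFinset] at hx'
    have huq : (pth r (host e₁)).takeUntil x hx' = pth r x :=
      huniq _ ((hpth _ _).takeUntil hx')
    rw [← huq] at hz
    exact Finset.mem_biUnion.mpr ⟨e₁, he₁, List.mem_toFinset.mpr
      (SimpleGraph.Walk.support_takeUntil_subset _ hx' hz)⟩
  have hT'path : ∀ x ∈ T', ∀ y ∈ T', ∀ z ∈ (pth x y).support, z ∈ T' := by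
    intro x hx y hy z hz
    have hsub := BalSepAux.pth_support_subset pth (fun q hq => huniq q hq)
      ((pth r x).reverse.append (pth r y))
    have hz' := hsub hz
    rw [SimpleGraph.Walk.mem_support_append_iff, SimpleGraph.Walk.support_reverse,
      List.mem_reverse] at hz'
    rcases hz' with h | h
    · exact hrsub x hx z h
    · exact hrsub y hy z h
  -- find a good node
  set Fb : ι → Finset (Finset α) := fun t => E'.filter (fun e => ¬ e ⊆ Bg t) with hFbdef
  have hgood : ∃ t ∈ T', ∀ e ∈ Fb t, 2 * ((Fb t).filter (Rr t e)).card ≤ E'.card := by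
    by_contra hbadall
    push_neg at hbadall
    choose wit hwitmem hwitbig using hbadall
    have hostne : ∀ (t) (h : t ∈ T'), t ≠ host (wit t h) := by
      intro t h heq
      have hm := hwitmem t h
      rw [hFbdef, Finset.mem_filter] at hm
      have h' := hhost _ (hE' hm.1)
      rw [← heq] at h'
      exact hm.2 h'
    set nxt : ι → ι := fun t => if h : t ∈ T' then (pth t (host (wit t h))).getVert 1 else r
      with hnxtdef
    have hstep : ∀ (t) (h : t ∈ T'), T.Adj t (nxt t) ∧
        BalSepAux.SS T t (host (wit t h)) (nxt t) ∧ nxt t ∈ T' := by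
      intro t h
      obtain ⟨x, hadj, q, hpq⟩ :=
        SimpleGraph.Walk.exists_eq_cons_of_ne (hostne t h) (pth t (host (wit t h)))
      have hx : nxt t = x := by
        rw [hnxtdef]
        simp only [dif_pos h]
        rw [hpq]; exact (SimpleGraph.Walk.getVert_cons_succ q hadj (n := 0)).trans q.getVert_zero
      have hq : t ∉ q.support := by
        have hip := hpth t (host (wit t h))
        rw [hpq, SimpleGraph.Walk.cons_isPath_iff] at hip
        exact hip.2
      refine ⟨by rw [hx]; exact hadj, by
        rw [hx]
        exact ⟨q.reverse, by simpa [SimpleGraph.Walk.support_reverse] using hq⟩, ?_⟩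
      rw [hx]
      have hxsupp : x ∈ (pth t (host (wit t h))).support := by
        rw [hpq, SimpleGraph.Walk.support_cons]
        exact List.mem_cons_of_mem _ q.start_mem_support
      have hwE' : wit t h ∈ E' := by
        have hm := hwitmem t h
        rw [hFbdef, Finset.mem_filter] at hm
        exact hm.1
      exact hT'path t h _ (hhostT' _ hwE') x hxsupp
    have h2cyc : ∀ t ∈ T', nxt (nxt t) ≠ t := by
      intro t ht heq
      have ht' : nxt t ∈ T' := (hstep t ht).2.2
      have hadj : T.Adj t (nxt t) := (hstep t ht).1
      have hCbig := hwitbig t ht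
      have hC'big := hwitbig (nxt t) ht'
      have hFbE : ∀ s, ∀ f ∈ Fb s, f ∈ E' := by
        intro s f hf
        rw [hFbdef, Finset.mem_filter] at hf
        exact hf.1
      have hCss : ∀ f ∈ (Fb t).filter (Rr t (wit t ht)), BalSepAux.SS T t (host f) (nxt t) := by
        intro f hf
        rw [Finset.mem_filter] at hf
        have hfE : f ∈ H.edges := hE' (hFbE t f hf.1)
        have heE : wit t ht ∈ H.edges := hE' (hFbE t _ (hwitmem t ht))
        exact ((hRSS t _ f heE hfE hf.2).symm).trans (hstep t ht).2.1
      have hC'ss : ∀ f ∈ (Fb (nxt t)).filter (Rr (nxt t) (wit (nxt t) ht')),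
          BalSepAux.SS T (nxt t) (host f) t := by
        intro f hf
        rw [Finset.mem_filter] at hf
        have hfE : f ∈ H.edges := hE' (hFbE (nxt t) f hf.1)
        have heE : wit (nxt t) ht' ∈ H.edges := hE' (hFbE (nxt t) _ (hwitmem (nxt t) ht'))
        have := ((hRSS (nxt t) _ f heE hfE hf.2).symm).trans (hstep (nxt t) ht').2.1
        rwa [heq] at this
      have hdisj : Disjoint ((Fb t).filter (Rr t (wit t ht)))
          ((Fb (nxt t)).filter (Rr (nxt t) (wit (nxt t) ht'))) := by
        rw [Finset.disjoint_left]
        intro f h1 h1'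
        exact BalSepAux.not_both_sides pth hpth (fun q hq => huniq q hq) hadj
          (hCss f h1) (hC'ss f h1')
      have hsub1 : (Fb t).filter (Rr t (wit t ht)) ⊆ E' :=
        fun f hf => hFbE t f (Finset.mem_filter.mp hf).1
      have hsub2 : (Fb (nxt t)).filter (Rr (nxt t) (wit (nxt t) ht')) ⊆ E' :=
        fun f hf => hFbE (nxt t) f (Finset.mem_filter.mp hf).1
      have hcu := Finset.card_union_of_disjoint hdisj
      have hcle := Finset.card_le_card (Finset.union_subset hsub1 hsub2)
      omega
    exact BalSepAux.no_escape pth (fun q hq => huniq q hq) T' r hrT' nxt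
      (fun x hx => (hstep x hx).1) (fun x hx => (hstep x hx).2.2) h2cyc
  obtain ⟨t, htT', hgoodt⟩ := hgood
  -- split the non-covered edges
  have hrefl : ∀ e ∈ Fb t, Rr t e e := by
    intro e he
    rw [hFbdef, Finset.mem_filter] at he
    obtain ⟨a, ha, hat⟩ := Finset.not_subset.mp he.2
    exact ⟨a, ha, hat, a, ha, hat, SimpleGraph.Reachable.refl a⟩
  have htrans' : ∀ e f g, f ∈ Fb t → Rr t e f → Rr t f g → Rr t e g := by
    intro e f g hf h1 h2
    refine hRtrans t e f g ?_ h1 h2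
    rw [hFbdef, Finset.mem_filter] at hf
    exact hE' hf.1
  obtain ⟨G, hGF, hGclosed, hG1, hG2⟩ := BalSepAux.split_lemma (Fb t) (Rr t) E'.card
    (by rw [hFbdef]; exact Finset.card_filter_le _ _) hrefl htrans' hgoodt
  refine ⟨E'.filter (· ⊆ Bg t), G, Fb t \ G, ?_, ?_, ?_, ?_,
    ⟨Bg t, ?_, ?_, hcov t⟩, hG1, hG2⟩
  · rw [Finset.union_assoc, Finset.union_sdiff_of_subset hGF, hFbdef]
    exact Finset.filter_union_filter_not_eq _ E'
  · exact (Finset.disjoint_filter_filter_not E' E' (· ⊆ Bg t)).mono_right hGF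
  · exact (Finset.disjoint_filter_filter_not E' E' (· ⊆ Bg t)).mono_right
      (Finset.sdiff_subset.trans (by rw [hFbdef]))
  · exact Finset.disjoint_sdiff
  · -- separator
    intro a ha haS b hb hbS hreach
    obtain ⟨e, heG, hae⟩ := Finset.mem_biUnion.mp ha
    obtain ⟨f, hfE2, hbf⟩ := Finset.mem_biUnion.mp hb
    have hfF : f ∈ Fb t := (Finset.mem_sdiff.mp hfE2).1
    have hfG : f ∈ G := hGclosed e heG f hfF ⟨a, hae, haS, b, hbf, hbS, hreach⟩
    exact (Finset.mem_sdiff.mp hfE2).2 hfG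
  · -- E0 ⊆ S
    intro x hx
    obtain ⟨e, he, hxe⟩ := Finset.mem_biUnion.mp hx
    exact (Finset.mem_filter.mp he).2 hxe
end
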